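/- Let Ψ_edge(λ) := √(λ(1+λ)) / ((1+2λ+2√(λ(1+λ)))^{2/3} + (1+2λ−2√(λ(1+λ)))^{2/3} + 1) for λ ≥ 0. Then there exist constants c, C > 0 such that for all λ ≥ 0, c·min{λ^{1/2}, λ^{1/3}} ≤ Ψ_edge(λ) ≤ C·min{λ^{1/2}, λ^{1/3}}. -/

import Mathlib

/-!
Write `s = √(l(1+l))`, so that `l ≤ s`, `√l ≤ s` and `2s ≤ 1 + 2l`. The second term of the
denominator lies in `[0, 1]` and the first is squeezed between `l^{2/3}` and `(2 + 4l)^{2/3}`, so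
the denominator is of order `1` for `l ≤ 1` and of order `l^{2/3}` for `l ≥ 1`, while `s` is of
order `√l` and `l` respectively. Hence `Ψ_edge(l)` is of order `√l` and `l^{1/3}` on the two ranges.
-/

/-- The universal edge shape function. -/
noncomputable def PsiEdge (l : ℝ) : ℝ :=
  Real.sqrt (l * (1 + l)) /
    ((1 + 2*l + 2*Real.sqrt (l*(1+l))) ^ ((2:ℝ)/3) +
     (1 + 2*l - 2*Real.sqrt (l*(1+l))) ^ ((2:ℝ)/3) + 1)

open Real

noncomputable def psiEdgeDenom (l : ℝ) : ℝ :=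
  (1 + 2*l + 2*√(l*(1+l))) ^ ((2:ℝ)/3) + (1 + 2*l - 2*√(l*(1+l))) ^ ((2:ℝ)/3) + 1

section

variable {l : ℝ}

lemma psiEdge_eq_div (l : ℝ) : PsiEdge l = √(l * (1 + l)) / psiEdgeDenom l := rfl

lemma le_sqrt_mul_one_add (hl : 0 ≤ l) : l ≤ √(l * (1 + l)) :=
  (le_sqrt hl (by positivity)).mpr (by nlinarith)

lemma sqrt_le_sqrt_mul_one_add (hl : 0 ≤ l) : √l ≤ √(l * (1 + l)) :=
  sqrt_le_sqrt (by nlinarith)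

lemma two_mul_sqrt_mul_one_add_le (hl : 0 ≤ l) : 2 * √(l * (1 + l)) ≤ 1 + 2 * l := by
  have : √(l * (1 + l)) ≤ (1 + 2 * l) / 2 := (sqrt_le_left (by linarith)).mpr (by nlinarith)
  linarith

lemma sqrt_mul_one_add_le_two_mul_sqrt (hl : 0 ≤ l) (hl1 : l ≤ 1) :
    √(l * (1 + l)) ≤ 2 * √l := by
  have : √(1 + l) ≤ 2 := (sqrt_le_left zero_le_two).mpr (by linarith)
  rw [sqrt_mul hl, mul_comm 2]
  exact mul_le_mul_of_nonneg_left this (sqrt_nonneg l)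

lemma one_le_psiEdgeDenom (hl : 0 ≤ l) : 1 ≤ psiEdgeDenom l := by
  have h := two_mul_sqrt_mul_one_add_le hl
  have h₁ : 0 ≤ (1 + 2*l + 2*√(l*(1+l))) ^ ((2:ℝ)/3) := rpow_nonneg (by positivity) _
  have h₂ : 0 ≤ (1 + 2*l - 2*√(l*(1+l))) ^ ((2:ℝ)/3) := rpow_nonneg (by linarith) _
  unfold psiEdgeDenom
  linarith

lemma rpow_two_thirds_le_psiEdgeDenom (hl : 0 ≤ l) : l ^ ((2:ℝ)/3) ≤ psiEdgeDenom l := by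
  have h := two_mul_sqrt_mul_one_add_le hl
  have h₁ : l ^ ((2:ℝ)/3) ≤ (1 + 2*l + 2*√(l*(1+l))) ^ ((2:ℝ)/3) :=
    rpow_le_rpow hl (by linarith [le_sqrt_mul_one_add hl]) (by norm_num)
  have h₂ : 0 ≤ (1 + 2*l - 2*√(l*(1+l))) ^ ((2:ℝ)/3) := rpow_nonneg (by linarith) _
  unfold psiEdgeDenom
  linarith

lemma psiEdgeDenom_le (hl : 0 ≤ l) : psiEdgeDenom l ≤ (2 + 4 * l) ^ ((2:ℝ)/3) + 2 := by
  have h := two_mul_sqrt_mul_one_add_le hl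
  have h₁ : (1 + 2*l + 2*√(l*(1+l))) ^ ((2:ℝ)/3) ≤ (2 + 4 * l) ^ ((2:ℝ)/3) :=
    rpow_le_rpow (by positivity) (by linarith) (by norm_num)
  have h₂ : (1 + 2*l - 2*√(l*(1+l))) ^ ((2:ℝ)/3) ≤ 1 :=
    rpow_le_one (by linarith) (by linarith [le_sqrt_mul_one_add hl]) (by norm_num)
  unfold psiEdgeDenom
  linarith

lemma psiEdge_bounds_of_le_one (hl : 0 ≤ l) (hl1 : l ≤ 1) :
    l ^ ((1:ℝ)/2) / 8 ≤ PsiEdge l ∧ PsiEdge l ≤ 2 * l ^ ((1:ℝ)/2) := by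
  rw [← sqrt_eq_rpow, psiEdge_eq_div]
  have hD : psiEdgeDenom l ≤ 8 := by
    have : (2 + 4 * l) ^ ((2:ℝ)/3) ≤ 2 + 4 * l :=
      rpow_le_self_of_one_le (by linarith) (by norm_num)
    linarith [psiEdgeDenom_le hl]
  have hD1 := one_le_psiEdgeDenom hl
  constructor
  · exact div_le_div₀ (sqrt_nonneg _) (sqrt_le_sqrt_mul_one_add hl) (by linarith) hD
  · exact (div_le_self (sqrt_nonneg _) hD1).trans (sqrt_mul_one_add_le_two_mul_sqrt hl hl1)

lemma div_rpow_two_thirds (hl : 0 < l) : l / l ^ ((2:ℝ)/3) = l ^ ((1:ℝ)/3) := by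
  have h := rpow_sub hl 1 (2/3)
  rw [rpow_one] at h
  rw [← h]
  norm_num

lemma psiEdge_bounds_of_one_le (hl1 : 1 ≤ l) :
    l ^ ((1:ℝ)/3) / 8 ≤ PsiEdge l ∧ PsiEdge l ≤ 2 * l ^ ((1:ℝ)/3) := by
  have hl : 0 < l := by linarith
  rw [← div_rpow_two_thirds hl, psiEdge_eq_div]
  have hD : psiEdgeDenom l ≤ 8 * l ^ ((2:ℝ)/3) := by
    have : (2 + 4 * l) ^ ((2:ℝ)/3) ≤ 6 * l ^ ((2:ℝ)/3) :=
      calc (2 + 4 * l) ^ ((2:ℝ)/3) ≤ (6 * l) ^ ((2:ℝ)/3) :=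
            rpow_le_rpow (by positivity) (by linarith) (by norm_num)
        _ = 6 ^ ((2:ℝ)/3) * l ^ ((2:ℝ)/3) := mul_rpow (by norm_num) hl.le
        _ ≤ 6 * l ^ ((2:ℝ)/3) := by
            gcongr
            exact rpow_le_self_of_one_le (by norm_num) (by norm_num)
    linarith [psiEdgeDenom_le hl.le, one_le_rpow hl1 (by norm_num : (0:ℝ) ≤ 2/3)]
  have hs : √(l * (1 + l)) ≤ 2 * l := by linarith [two_mul_sqrt_mul_one_add_le hl.le]
  constructor
  · rw [div_div, mul_comm]
    exact div_le_div₀ (sqrt_nonneg _) (le_sqrt_mul_one_add hl.le)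
      (by linarith [one_le_psiEdgeDenom hl.le]) hD
  · rw [← mul_div_assoc]
    exact div_le_div₀ (by positivity) hs (by positivity) (rpow_two_thirds_le_psiEdgeDenom hl.le)

end

theorem stmt_3 : ∃ c C : ℝ, 0 < c ∧ 0 < C ∧ ∀ l : ℝ, 0 ≤ l →
    c * min (l ^ ((1:ℝ)/2)) (l ^ ((1:ℝ)/3)) ≤ PsiEdge l ∧
    PsiEdge l ≤ C * min (l ^ ((1:ℝ)/2)) (l ^ ((1:ℝ)/3)) := by
  refine ⟨1/8, 2, by norm_num, by norm_num, fun l hl => ?_⟩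
  rcases le_total l 1 with hl1 | hl1
  · rw [min_eq_left (rpow_le_rpow_of_exponent_ge' hl hl1 (by norm_num) (by norm_num)),
      one_div_mul_eq_div]
    exact psiEdge_bounds_of_le_one hl hl1
  · rw [min_eq_right (rpow_le_rpow_of_exponent_le hl1 (by norm_num)), one_div_mul_eq_div]
    exact psiEdge_bounds_of_one_le hl1
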